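/- arXiv:1903.00048 — 7 statements merged into one kernel-verified Lean document; each statement's English description precedes it below -/
import Mathlib

section
/- Let {z(t)} be a nonnegative real sequence satisfying z(t+1) = (1 - r1(t)) z(t) + r2(t) with z(0) ≥ 0, where r1(t) = a1/(t+1)^{δ1} and r2(t) = a2/(t+1)^{δ2}, with 0 ≤ r1(t) ≤ 1 for all t, a1 > 0, a2 > 0, 0 ≤ δ1 < 1, δ2 ≥ 0, and δ1 < δ2. Then for every δ0 ∈ [0, δ2 − δ1), lim_{t→∞} (t+1)^{δ0} z(t) = 0. -/
/-!
Fix γ with δ0 < γ < δ2 - δ1. By convexity, (x + 1)^(-γ) ≥ x^(-γ) - γ x^(-γ-1), and since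
δ1 < 1 and γ + δ1 < δ2 both γ x^(-γ-1) and a2 x^(-δ2) are eventually dominated by
a1 x^(-δ1) x^(-γ). Hence (t + 1)^(-γ), and every multiple K ≥ 1 of it, is eventually a
supersolution of the recursion satisfied by |z|, so by comparison |z t| = O((t + 1)^(-γ)),
which beats the weight (t + 1)^δ0.
-/

open Filter

theorem Real.tendsto_rpow_atTop_nhds_zero_of_neg {e : ℝ} (he : e < 0) :
    Tendsto (fun x : ℝ => x ^ e) atTop (nhds 0) := by
  simpa using tendsto_rpow_neg_atTop (neg_pos.2 he)

theorem tendsto_natCast_add_one_atTop : Tendsto (fun t : ℕ => (t : ℝ) + 1) atTop atTop :=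
  tendsto_atTop_add_const_right _ 1 tendsto_natCast_atTop_atTop

theorem Real.one_sub_mul_le_one_add_rpow_neg {s γ : ℝ} (hs : 0 ≤ s) (hγ : 0 ≤ γ) :
    1 - γ * s ≤ (1 + s) ^ (-γ) := by
  have hlog : Real.log (1 + s) ≤ s := by
    linarith [Real.log_le_sub_one_of_pos (x := 1 + s) (by positivity)]
  rw [Real.rpow_def_of_pos (by positivity)]
  nlinarith [Real.add_one_le_exp (Real.log (1 + s) * -γ), mul_le_mul_of_nonneg_left hlog hγ]

theorem Real.rpow_neg_sub_mul_le_add_one_rpow_neg {x γ : ℝ} (hx : 0 < x) (hγ : 0 ≤ γ) :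
    x ^ (-γ) - γ * x ^ (-γ - 1) ≤ (x + 1) ^ (-γ) := by
  have hsplit : (x + 1) ^ (-γ) = x ^ (-γ) * (1 + x⁻¹) ^ (-γ) := by
    rw [← Real.mul_rpow hx.le (by positivity), mul_add, mul_inv_cancel₀ hx.ne', mul_one]
  have hpow : x ^ (-γ - 1) = x ^ (-γ) * x⁻¹ := by
    rw [Real.rpow_sub_one hx.ne', div_eq_mul_inv]
  rw [hsplit, hpow]
  nlinarith [mul_le_mul_of_nonneg_left
    (Real.one_sub_mul_le_one_add_rpow_neg (inv_nonneg.2 hx.le) hγ) (Real.rpow_nonneg hx.le (-γ))]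

theorem rpow_neg_supersolution_of_le {x a b δ1 δ2 γ : ℝ} (hx : 0 < x) (hγ : 0 ≤ γ)
    (h : γ * x ^ (δ1 - 1) + b * x ^ (γ + δ1 - δ2) ≤ a) :
    (1 - a / x ^ δ1) * x ^ (-γ) + b / x ^ δ2 ≤ (x + 1) ^ (-γ) := by
  have hmul := mul_le_mul_of_nonneg_right h (Real.rpow_nonneg hx.le (-γ - δ1))
  have e1 : x ^ (δ1 - 1) * x ^ (-γ - δ1) = x ^ (-γ - 1) := by
    rw [← Real.rpow_add hx]; ring_nf
  have e2 : x ^ (γ + δ1 - δ2) * x ^ (-γ - δ1) = (x ^ δ2)⁻¹ := by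
    rw [← Real.rpow_add hx, ← Real.rpow_neg hx.le]; ring_nf
  have e3 : (x ^ δ1)⁻¹ * x ^ (-γ) = x ^ (-γ - δ1) := by
    rw [← Real.rpow_neg hx.le, ← Real.rpow_add hx]; ring_nf
  rw [add_mul, mul_assoc, mul_assoc, e1, e2] at hmul
  have := Real.rpow_neg_sub_mul_le_add_one_rpow_neg hx hγ
  rw [div_eq_mul_inv, div_eq_mul_inv]
  linarith [show a * (x ^ δ1)⁻¹ * x ^ (-γ) = a * x ^ (-γ - δ1) by rw [mul_assoc, e3]]

theorem eventually_rpow_neg_supersolution {a δ1 δ2 γ : ℝ} (ha : 0 < a) (hγ : 0 ≤ γ)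
    (hδ1 : δ1 < 1) (hγδ : γ + δ1 < δ2) (b : ℝ) :
    ∀ᶠ x : ℝ in atTop, (1 - a / x ^ δ1) * x ^ (-γ) + b / x ^ δ2 ≤ (x + 1) ^ (-γ) := by
  have hsmall :
      Tendsto (fun x : ℝ => γ * x ^ (δ1 - 1) + b * x ^ (γ + δ1 - δ2)) atTop (nhds 0) := by
    simpa using ((Real.tendsto_rpow_atTop_nhds_zero_of_neg (by linarith)).const_mul γ).add
      ((Real.tendsto_rpow_atTop_nhds_zero_of_neg (by linarith)).const_mul b)
  filter_upwards [hsmall.eventually (eventually_le_nhds ha), eventually_gt_atTop 0] with x hx hx0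
  exact rpow_neg_supersolution_of_le hx0 hγ hx

theorem le_of_supersolution {w v c r : ℕ → ℝ} {T : ℕ} (hc : ∀ t ≥ T, 0 ≤ c t)
    (hw : ∀ t ≥ T, w (t + 1) ≤ c t * w t + r t)
    (hv : ∀ t ≥ T, c t * v t + r t ≤ v (t + 1))
    (hT : w T ≤ v T) : ∀ t ≥ T, w t ≤ v t := by
  intro t ht
  induction t, ht using Nat.le_induction with
  | base => exact hT
  | succ n hn ih =>
    calc w (n + 1) ≤ c n * w n + r n := hw n hn
      _ ≤ c n * v n + r n := by gcongr; exact hc n hn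
      _ ≤ v (n + 1) := hv n hn

theorem exists_bound_rpow_neg_of_le_recursion {z : ℕ → ℝ} {a b δ1 δ2 γ : ℝ} (ha : 0 < a)
    (hb : 0 ≤ b) (hγ : 0 ≤ γ) (hδ1 : δ1 < 1) (hγδ : γ + δ1 < δ2)
    (hr : ∀ t : ℕ, a / ((t : ℝ) + 1) ^ δ1 ≤ 1)
    (hrec : ∀ t : ℕ,
      z (t + 1) ≤ (1 - a / ((t : ℝ) + 1) ^ δ1) * z t + b / ((t : ℝ) + 1) ^ δ2) :
    ∃ K, ∀ᶠ t in atTop, z t ≤ K * ((t : ℝ) + 1) ^ (-γ) := by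
  obtain ⟨T, hT⟩ := eventually_atTop.1 <|
    tendsto_natCast_add_one_atTop.eventually (eventually_rpow_neg_supersolution ha hγ hδ1 hγδ b)
  set v : ℕ → ℝ := fun t => ((t : ℝ) + 1) ^ (-γ)
  set K := max 1 (z T / v T)
  have hv0 : 0 < v T := by positivity
  have hsuper : ∀ t ≥ T, (1 - a / ((t : ℝ) + 1) ^ δ1) * (K * v t) + b / ((t : ℝ) + 1) ^ δ2
      ≤ K * v (t + 1) := by
    intro t ht
    have hK : 1 ≤ K := le_max_left _ _
    have hr0 : 0 ≤ b / ((t : ℝ) + 1) ^ δ2 := by positivity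
    have hvt : v (t + 1) = ((t : ℝ) + 1 + 1) ^ (-γ) := by simp [v]
    calc (1 - a / ((t : ℝ) + 1) ^ δ1) * (K * v t) + b / ((t : ℝ) + 1) ^ δ2
        ≤ K * ((1 - a / ((t : ℝ) + 1) ^ δ1) * v t + b / ((t : ℝ) + 1) ^ δ2) := by
          nlinarith
      _ ≤ K * v (t + 1) := by rw [hvt]; gcongr; exact hT t ht
  have hstart : z T ≤ K * v T := by
    calc z T = z T / v T * v T := (div_mul_cancel₀ _ hv0.ne').symm
      _ ≤ K * v T := by gcongr; exact le_max_right _ _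
  exact ⟨K, eventually_atTop.2 ⟨T, le_of_supersolution (fun t _ => by linarith [hr t])
    (fun t _ => hrec t) hsuper hstart⟩⟩

theorem scalar_recursion_lemma_case1_general
    (z : ℕ → ℝ) (a1 a2 δ1 δ2 : ℝ)
    (ha1 : 0 < a1)
    (hδ1' : δ1 < 1) (hδ12 : δ1 < δ2)
    (hr1 : ∀ t : ℕ, 0 ≤ a1 / ((t : ℝ) + 1) ^ δ1 ∧ a1 / ((t : ℝ) + 1) ^ δ1 ≤ 1)
    (hrec : ∀ t : ℕ,
      z (t + 1) = (1 - a1 / ((t : ℝ) + 1) ^ δ1) * z t + a2 / ((t : ℝ) + 1) ^ δ2) :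
    ∀ δ0 : ℝ, 0 ≤ δ0 → δ0 < δ2 - δ1 →
      Tendsto (fun t : ℕ => ((t : ℝ) + 1) ^ δ0 * z t) atTop (nhds 0) := by
  intro δ0 hδ0 hδ0'
  set γ := (δ0 + (δ2 - δ1)) / 2 with hγ
  have habs (t : ℕ) : |z (t + 1)| ≤
      (1 - a1 / ((t : ℝ) + 1) ^ δ1) * |z t| + |a2| / ((t : ℝ) + 1) ^ δ2 := by
    rw [hrec t]
    refine (abs_add_le _ _).trans_eq ?_
    rw [abs_mul, abs_div, abs_of_nonneg (sub_nonneg.2 (hr1 t).2),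
      abs_of_pos (by positivity : (0 : ℝ) < ((t : ℝ) + 1) ^ δ2)]
  obtain ⟨K, hK⟩ := exists_bound_rpow_neg_of_le_recursion (z := fun t => |z t|) ha1
    (abs_nonneg a2) (by linarith : 0 ≤ γ) hδ1' (by linarith : γ + δ1 < δ2)
    (fun t => (hr1 t).2) habs
  refine squeeze_zero_norm' ?_ (by simpa using ((Real.tendsto_rpow_atTop_nhds_zero_of_neg
    (by linarith : δ0 - γ < 0)).comp tendsto_natCast_add_one_atTop).const_mul K)
  filter_upwards [hK] with t ht
  have hu : (0 : ℝ) < (t : ℝ) + 1 := by positivity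
  calc ‖((t : ℝ) + 1) ^ δ0 * z t‖ = ((t : ℝ) + 1) ^ δ0 * |z t| := by
        rw [norm_mul, Real.norm_of_nonneg (by positivity), Real.norm_eq_abs]
    _ ≤ ((t : ℝ) + 1) ^ δ0 * (K * ((t : ℝ) + 1) ^ (-γ)) := by gcongr
    _ = K * ((t : ℝ) + 1) ^ (δ0 - γ) := by
        rw [sub_eq_add_neg, Real.rpow_add hu]; ring

theorem scalar_recursion_lemma_case1
    (z : ℕ → ℝ) (a1 a2 δ1 δ2 : ℝ)
    (hz0 : 0 ≤ z 0)
    (ha1 : 0 < a1) (ha2 : 0 < a2)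
    (hδ1 : 0 ≤ δ1) (hδ1' : δ1 < 1) (hδ2 : 0 ≤ δ2) (hδ12 : δ1 < δ2)
    (hr1 : ∀ t : ℕ, 0 ≤ a1 / ((t : ℝ) + 1) ^ δ1 ∧ a1 / ((t : ℝ) + 1) ^ δ1 ≤ 1)
    (hrec : ∀ t : ℕ,
      z (t + 1) = (1 - a1 / ((t : ℝ) + 1) ^ δ1) * z t + a2 / ((t : ℝ) + 1) ^ δ2) :
    ∀ δ0 : ℝ, 0 ≤ δ0 → δ0 < δ2 - δ1 →
      Tendsto (fun t : ℕ => ((t : ℝ) + 1) ^ δ0 * z t) atTop (nhds 0) :=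
  scalar_recursion_lemma_case1_general z a1 a2 δ1 δ2 ha1 hδ1' hδ12 hr1 hrec
end

section
/- Let {z(t)} be a nonnegative real sequence satisfying z(t+1) = (1 - r1(t)) z(t) + r2(t) with z(0) ≥ 0, where r1(t) = a1/(t+1) and r2(t) = a2/(t+1)^{δ2}, with 0 ≤ r1(t) ≤ 1 for all t, a1 > 0, a2 > 0, δ2 > 1, and a scalar δ0 with 0 ≤ δ0 < δ2 − 1 and a1 > δ0. Then lim_{t→∞} (t+1)^{δ0} z(t) = 0. -/
open Filter

/-!
Pick `β` with `δ0 < β < min a1 (δ2 - 1)`. For a large enough constant `C` the sequence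
`C (t + 1) ^ (-β)` is a supersolution of the recursion: the convexity of `x ↦ x ^ (-β)` absorbs the
gap `a1 - β` in the contraction, which pays for the forcing term `a2 / (t + 1) ^ δ2` since
`δ2 ≥ β + 1`. Hence `0 ≤ z t ≤ C (t + 1) ^ (-β)`, and `(t + 1) ^ δ0 z t ≤ C (t + 1) ^ (δ0 - β) → 0`.
-/

theorem le_of_subsolution_of_supersolution {R : Type*} [Semiring R] [PartialOrder R]
    [IsOrderedRing R] {u v c b : ℕ → R} (hc : ∀ t, 0 ≤ c t)
    (hu : ∀ t, u (t + 1) ≤ c t * u t + b t) (hv : ∀ t, c t * v t + b t ≤ v (t + 1))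
    (h0 : u 0 ≤ v 0) : ∀ t, u t ≤ v t
  | 0 => h0
  | t + 1 =>
    calc u (t + 1) ≤ c t * u t + b t := hu t
      _ ≤ c t * v t + b t := by
        gcongr
        · exact hc t
        · exact le_of_subsolution_of_supersolution hc hu hv h0 t
      _ ≤ v (t + 1) := hv t

/-- The tangent-line inequality for the convex function `x ↦ x ^ (-β)`. -/
theorem rpow_neg_mul_one_sub_div_le {x β : ℝ} (hx : 0 < x) (hβ : 0 ≤ β) :
    x ^ (-β) * (1 - β / x) ≤ (x + 1) ^ (-β) := by
  have hx1 : 0 < x + 1 := by linarith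
  -- Bernoulli's inequality with exponent `β + 1` at `s = -1 / (x + 1)`
  have hbern := one_add_mul_self_le_rpow_one_add (s := -1 / (x + 1))
    (by rw [neg_div, neg_le_neg_iff, div_le_one hx1]; linarith) (p := β + 1) (by linarith)
  have hbase : 1 + -1 / (x + 1) = x / (x + 1) := by field_simp; ring
  rw [hbase, Real.div_rpow hx.le hx1.le, Real.rpow_add_one hx.ne', Real.rpow_add_one hx1.ne']
    at hbern
  have : 0 < x ^ β := by positivity
  have : 0 < (x + 1) ^ β := by positivity
  rw [Real.rpow_neg hx.le, Real.rpow_neg hx1.le]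
  field_simp at hbern ⊢
  linarith

theorem mul_rpow_neg_supersolution {a1 a2 β δ2 C x : ℝ} (hx : 1 ≤ x) (hβ : 0 ≤ β)
    (hβδ2 : β + 1 ≤ δ2) (ha2 : 0 ≤ a2) (hC : a2 ≤ C * (a1 - β)) (hC0 : 0 ≤ C) :
    (1 - a1 / x) * (C * x ^ (-β)) + a2 / x ^ δ2 ≤ C * (x + 1) ^ (-β) := by
  have hx0 : 0 < x := by linarith
  have hforcing : a2 / x ^ δ2 ≤ C * (a1 - β) * x ^ (-β) / x :=
    calc a2 / x ^ δ2 ≤ a2 / x ^ (β + 1) :=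
          div_le_div_of_nonneg_left ha2 (by positivity) (Real.rpow_le_rpow_of_exponent_le hx hβδ2)
      _ ≤ C * (a1 - β) / x ^ (β + 1) := by gcongr
      _ = C * (a1 - β) * x ^ (-β) / x := by
          rw [Real.rpow_add_one hx0.ne', Real.rpow_neg hx0.le]; field_simp
  calc (1 - a1 / x) * (C * x ^ (-β)) + a2 / x ^ δ2
      ≤ (1 - a1 / x) * (C * x ^ (-β)) + C * (a1 - β) * x ^ (-β) / x := by gcongr
    _ = C * (x ^ (-β) * (1 - β / x)) := by field_simp; ring
    _ ≤ C * (x + 1) ^ (-β) := by gcongr; exact rpow_neg_mul_one_sub_div_le hx0 hβ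

theorem scalar_recursion_lemma_case2_general
    (z : ℕ → ℝ) (a1 a2 δ0 δ2 : ℝ)
    (hz0 : 0 ≤ z 0)
    (ha2 : 0 < a2)
    (hδ0 : 0 ≤ δ0) (hδ02 : δ0 < δ2 - 1) (ha1δ0 : δ0 < a1)
    (hr1 : ∀ t : ℕ, 0 ≤ a1 / ((t : ℝ) + 1) ∧ a1 / ((t : ℝ) + 1) ≤ 1)
    (hrec : ∀ t : ℕ,
      z (t + 1) = (1 - a1 / ((t : ℝ) + 1)) * z t + a2 / ((t : ℝ) + 1) ^ δ2) :
    Tendsto (fun t : ℕ => ((t : ℝ) + 1) ^ δ0 * z t) atTop (nhds 0) := by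
  obtain ⟨β, hδ0β, hβ⟩ := exists_between (lt_min ha1δ0 hδ02)
  obtain ⟨hβa1, hβδ2⟩ := lt_min_iff.1 hβ
  set C := max (z 0) (a2 / (a1 - β))
  have hC : a2 ≤ C * (a1 - β) := (div_le_iff₀ (by linarith)).1 (le_max_right _ _)
  have hcontr : ∀ t : ℕ, 0 ≤ 1 - a1 / ((t : ℝ) + 1) := fun t => sub_nonneg.2 (hr1 t).2
  have hzC : z 0 ≤ C := le_max_left _ _
  have hz_nonneg : ∀ t, 0 ≤ z t :=
    le_of_subsolution_of_supersolution (u := 0) hcontr (fun t => by simp; positivity)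
      (fun t => (hrec t).ge) hz0
  have hz_le : ∀ t : ℕ, z t ≤ C * ((t : ℝ) + 1) ^ (-β) := by
    refine le_of_subsolution_of_supersolution hcontr (fun t => (hrec t).le) (fun t => ?_)
      (by simpa using hzC)
    push_cast
    exact mul_rpow_neg_supersolution (by simp) (by linarith) (by linarith) ha2.le hC
      (hz0.trans hzC)
  have hbound : ∀ t : ℕ, ((t : ℝ) + 1) ^ δ0 * z t ≤ C * ((t : ℝ) + 1) ^ (-(β - δ0)) := fun t =>
    calc ((t : ℝ) + 1) ^ δ0 * z t ≤ ((t : ℝ) + 1) ^ δ0 * (C * ((t : ℝ) + 1) ^ (-β)) := by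
          gcongr; exact hz_le t
      _ = C * ((t : ℝ) + 1) ^ (-(β - δ0)) := by
          rw [neg_sub, sub_eq_add_neg, Real.rpow_add (by positivity)]; ring
  have hlim : Tendsto (fun t : ℕ => C * ((t : ℝ) + 1) ^ (-(β - δ0))) atTop (nhds 0) := by
    simpa using ((tendsto_rpow_neg_atTop (sub_pos.2 hδ0β)).comp
      (tendsto_atTop_add_const_right _ 1 tendsto_natCast_atTop_atTop)).const_mul C
  exact tendsto_of_tendsto_of_tendsto_of_le_of_le tendsto_const_nhds hlim
    (fun t => mul_nonneg (by positivity) (hz_nonneg t)) hbound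

theorem scalar_recursion_lemma_case2
    (z : ℕ → ℝ) (a1 a2 δ0 δ2 : ℝ)
    (hz0 : 0 ≤ z 0)
    (ha1 : 0 < a1) (ha2 : 0 < a2)
    (hδ2 : 1 < δ2) (hδ0 : 0 ≤ δ0) (hδ02 : δ0 < δ2 - 1) (ha1δ0 : δ0 < a1)
    (hr1 : ∀ t : ℕ, 0 ≤ a1 / ((t : ℝ) + 1) ∧ a1 / ((t : ℝ) + 1) ≤ 1)
    (hrec : ∀ t : ℕ,
      z (t + 1) = (1 - a1 / ((t : ℝ) + 1)) * z t + a2 / ((t : ℝ) + 1) ^ δ2) :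
    Tendsto (fun t : ℕ => ((t : ℝ) + 1) ^ δ0 * z t) atTop (nhds 0) :=
  scalar_recursion_lemma_case2_general z a1 a2 δ0 δ2 hz0 ha2 hδ0 hδ02 ha1δ0 hr1 hrec
end

section
/- Let L ∈ ℝ^{N×N} be the Laplacian of a connected undirected graph on N vertices, and let H_1, …, H_N with H_i ∈ ℝ^{m_i × n} satisfy that G = Σ_{i=1}^N H_i^T H_i is positive definite (full rank). Let D_H = blockdiag(H_1^T H_1, …, H_N^T H_N) ∈ ℝ^{Nn×Nn}. Then the symmetric matrix L ⊗ I_n + D_H is positive definite. -/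
/-!
For `x = (x_i)_i` with `x_i ∈ ℝⁿ`, the quadratic form of `L ⊗ I_n + D_H` is the sum of two
nonnegative forms, so it vanishes only on the common kernel of `L ⊗ I_n` and `D_H`. The first
kernel consists of the `x` whose blocks are all equal to one `c ∈ ℝⁿ` (connectedness), and then
the second forces `H_iᵀ H_i c = 0` for every `i`, i.e. `G c = 0`, whence `c = 0`.
-/

open Matrix Kronecker

namespace Matrix

open scoped ComplexOrder

variable {α 𝕜 ι κ : Type*} [Fintype ι] [Fintype κ]

theorem PosSemidef.posDef_add_of_mulVec_eq_zero [RCLike 𝕜] {A B : Matrix ι ι 𝕜}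
    (hA : A.PosSemidef) (hB : B.PosSemidef) (h : ∀ x, A *ᵥ x = 0 → B *ᵥ x = 0 → x = 0) :
    (A + B).PosDef := by
  refine .of_dotProduct_mulVec_pos (hA.isHermitian.add hB.isHermitian) fun x hx => ?_
  rw [add_mulVec, dotProduct_add]
  have hAx := hA.dotProduct_mulVec_nonneg x
  have hBx := hB.dotProduct_mulVec_nonneg x
  refine lt_of_le_of_ne (add_nonneg hAx hBx) fun hsum => hx (h x ?_ ?_)
  · exact (hA.dotProduct_mulVec_zero_iff x).1 ((add_eq_zero_iff_of_nonneg hAx hBx).1 hsum.symm).1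
  · exact (hB.dotProduct_mulVec_zero_iff x).1 ((add_eq_zero_iff_of_nonneg hAx hBx).1 hsum.symm).2

theorem PosDef.eq_zero_of_forall_mulVec_eq_zero [RCLike 𝕜] {B : ι → Matrix κ κ 𝕜}
    (hB : (∑ i, B i).PosDef) {c : κ → 𝕜} (hc : ∀ i, B i *ᵥ c = 0) : c = 0 := by
  by_contra hc0
  have := hB.dotProduct_mulVec_pos hc0
  simp [sum_mulVec, hc] at this

theorem kronecker_one_mulVec_apply [NonAssocSemiring α] [DecidableEq κ] (A : Matrix ι ι α)
    (x : ι × κ → α) (i : ι) (j : κ) :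
    ((A ⊗ₖ (1 : Matrix κ κ α)) *ᵥ x) (i, j) = (A *ᵥ fun k => x (k, j)) i := by
  simp [mulVec, dotProduct, kroneckerMap_apply, one_apply, Fintype.sum_prod_type]

/-- `Matrix.blockDiagonal` with the block index as the first coordinate, as in `D_H`. -/
def blockDiagonalFst [Zero α] [DecidableEq ι] (B : ι → Matrix κ κ α) :
    Matrix (ι × κ) (ι × κ) α :=
  of fun p q => if p.1 = q.1 then B p.1 p.2 q.2 else 0

variable [DecidableEq ι]

theorem blockDiagonalFst_mulVec_apply [NonUnitalNonAssocSemiring α] (B : ι → Matrix κ κ α)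
    (x : ι × κ → α) (i : ι) (j : κ) :
    (blockDiagonalFst B *ᵥ x) (i, j) = (B i *ᵥ fun l => x (i, l)) j := by
  simp [blockDiagonalFst, mulVec, dotProduct, Fintype.sum_prod_type]

theorem PosSemidef.blockDiagonalFst [RCLike 𝕜] {B : ι → Matrix κ κ 𝕜}
    (hB : ∀ i, (B i).PosSemidef) : (blockDiagonalFst B).PosSemidef := by
  refine .of_dotProduct_mulVec_nonneg ?_ fun x => ?_
  · ext ⟨i, j⟩ ⟨k, l⟩
    rcases eq_or_ne k i with rfl | hki
    · simpa [Matrix.blockDiagonalFst] using (hB k).isHermitian.apply j l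
    · simp [Matrix.blockDiagonalFst, hki, hki.symm]
  · rw [dotProduct, Fintype.sum_prod_type]
    simp only [blockDiagonalFst_mulVec_apply]
    exact Finset.sum_nonneg fun i _ => (hB i).dotProduct_mulVec_nonneg fun l => x (i, l)

end Matrix

theorem lapKron_add_DH_posDef_general {N n : ℕ}
    (L : Matrix (Fin N) (Fin N) ℝ)
    (hLpsd : L.PosSemidef)
    -- connectedness: the null space of L is spanned by the all-ones vector
    (hker : ∀ x : Fin N → ℝ, L *ᵥ x = 0 → ∃ c : ℝ, x = fun _ => c)
    (m : Fin N → ℕ) (H : ∀ i : Fin N, Matrix (Fin (m i)) (Fin n) ℝ)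
    (hG : (∑ i : Fin N, (H i)ᵀ * H i).PosDef) :
    (L ⊗ₖ (1 : Matrix (Fin n) (Fin n) ℝ) +
      Matrix.of (fun p q : Fin N × Fin n =>
        if p.1 = q.1 then ((H p.1)ᵀ * H p.1) p.2 q.2 else 0)).PosDef := by
  have hB : ∀ i, ((H i)ᵀ * H i).PosSemidef := fun i => by
    simpa using posSemidef_conjTranspose_mul_self (H i)
  refine (hLpsd.kronecker PosSemidef.one).posDef_add_of_mulVec_eq_zero
    (PosSemidef.blockDiagonalFst hB)
    fun x hLx (hDx : blockDiagonalFst (fun i => (H i)ᵀ * H i) *ᵥ x = 0) => ?_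
  obtain ⟨c, hc⟩ : ∃ c : Fin n → ℝ, ∀ i j, x (i, j) = c j := by
    choose c hc using fun j => hker (fun i => x (i, j)) <| funext fun i => by
      simpa [kronecker_one_mulVec_apply] using congrFun hLx (i, j)
    exact ⟨c, fun i j => congrFun (hc j) i⟩
  have hc0 : c = 0 := hG.eq_zero_of_forall_mulVec_eq_zero fun i => funext fun j => by
    simpa [blockDiagonalFst_mulVec_apply, hc] using congrFun hDx (i, j)
  ext ⟨i, j⟩
  simp [hc, hc0]

theorem lapKron_add_DH_posDef {N n : ℕ} (hN : 0 < N)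
    (L : Matrix (Fin N) (Fin N) ℝ)
    (hLpsd : L.PosSemidef)
    (hL1 : L *ᵥ (fun _ => (1 : ℝ)) = 0)
    -- connectedness: the null space of L is spanned by the all-ones vector
    (hker : ∀ x : Fin N → ℝ, L *ᵥ x = 0 → ∃ c : ℝ, x = fun _ => c)
    (m : Fin N → ℕ) (H : ∀ i : Fin N, Matrix (Fin (m i)) (Fin n) ℝ)
    (hG : (∑ i : Fin N, (H i)ᵀ * H i).PosDef) :
    (L ⊗ₖ (1 : Matrix (Fin n) (Fin n) ℝ) +
      Matrix.of (fun p q : Fin N × Fin n =>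
        if p.1 = q.1 then ((H p.1)ᵀ * H p.1) p.2 q.2 else 0)).PosDef :=
  lapKron_add_DH_posDef_general L hLpsd hker m H hG
end

section
/- Let L ∈ ℝ^{N×N} be the Laplacian of a connected undirected graph and D_H ∈ ℝ^{Nn×Nn} a block-diagonal positive semidefinite matrix such that L ⊗ I_n + D_H is positive definite. Let α(t) = a/(t+1)^{τ1} and β(t) = b/(t+1)^{τ2} with a, b > 0 and 0 < τ2 ≤ τ1 ≤ 1. Then there exist a positive definite matrix M_0 ∈ ℝ^{Nn×Nn} and an integer T such that for all t > T: α(t) M_0 ⪯ β(t)(L ⊗ I_n) + α(t) D_H ≺ I_{Nn}. -/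
/-!
Take `M₀ = (b/a) (L ⊗ I) + D_H`, which is positive definite because it dominates
`min (b/a) 1 (L ⊗ I + D_H)`. Then `β (L ⊗ I) + α D_H - α M₀ = (β - α b/a) (L ⊗ I)`, and
`β/α = (b/a) (t+1)^(τ₁-τ₂) ≥ b/a`. For the upper bound, `β (L ⊗ I) + α D_H ⪯ (α + β) K`
with `K = L ⊗ I + D_H`, and `K ⪯ ‖K‖ I` for the operator norm, so the claim holds once
`(α + β) ‖K‖ < 1`, which happens eventually since `α, β → 0`.
-/

open Matrix Kronecker Filter Topology
open scoped MatrixOrder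

namespace Matrix

variable {m : Type*}

theorem posDef_smul_add_of_posDef_add {A B : Matrix m m ℝ} (hA : A.PosSemidef)
    (hB : B.PosSemidef) (hAB : (A + B).PosDef) {c : ℝ} (hc : 0 < c) : (c • A + B).PosDef := by
  have h : c • A + B = min c 1 • (A + B) + ((c - min c 1) • A + (1 - min c 1) • B) := by
    module
  rw [h]
  exact (hAB.smul (lt_min hc one_pos)).add_posSemidef
    ((hA.smul (sub_nonneg.mpr (min_le_left _ _))).add (hB.smul (sub_nonneg.mpr (min_le_right _ _))))

theorem smul_smul_add_le_smul_add_smul {A B : Matrix m m ℝ} (hA : A.PosSemidef)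
    {α β c : ℝ} (h : α * c ≤ β) : α • (c • A + B) ≤ β • A + α • B := by
  rw [le_iff, show β • A + α • B - α • (c • A + B) = (β - α * c) • A by module]
  exact hA.smul (sub_nonneg.mpr h)

theorem smul_add_smul_le_add_smul_add {A B : Matrix m m ℝ} (hA : A.PosSemidef)
    (hB : B.PosSemidef) {α β : ℝ} (hα : 0 ≤ α) (hβ : 0 ≤ β) :
    β • A + α • B ≤ (α + β) • (A + B) := by
  rw [le_iff, show (α + β) • (A + B) - (β • A + α • B) = α • A + β • B by module]
  exact (hA.smul hα).add (hB.smul hβ)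

variable [DecidableEq m]

theorem posDef_one_sub_of_le_smul_one {A : Matrix m m ℝ} {c : ℝ} (hA : A ≤ c • 1)
    (hc : c < 1) : (1 - A).PosDef := by
  rw [show 1 - A = (1 - c) • (1 : Matrix m m ℝ) + (c • 1 - A) by module]
  exact (PosDef.one.smul (sub_pos.mpr hc)).add_posSemidef hA

variable [Fintype m]

theorem IsHermitian.le_norm_smul_one {A : Matrix m m ℝ} (hA : A.IsHermitian) :
    A ≤ ‖toEuclideanCLM (𝕜 := ℝ) A‖ • (1 : Matrix m m ℝ) := by
  refine PosSemidef.of_dotProduct_mulVec_nonneg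
    ((isHermitian_one.smul (IsSelfAdjoint.all _)).sub hA) fun x => ?_
  set x' := WithLp.toLp 2 x
  have hx : ‖x'‖ ^ 2 = x ⬝ᵥ x := by
    rw [← real_inner_self_eq_norm_sq, EuclideanSpace.inner_eq_star_dotProduct]; simp [x']
  have h : x ⬝ᵥ A *ᵥ x ≤ ‖toEuclideanCLM (𝕜 := ℝ) A‖ * (x ⬝ᵥ x) := by
    rw [← inner_toEuclideanCLM, ← hx]
    calc _ ≤ ‖x'‖ * ‖toEuclideanCLM (𝕜 := ℝ) A x'‖ := real_inner_le_norm _ _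
      _ ≤ ‖x'‖ * (‖toEuclideanCLM (𝕜 := ℝ) A‖ * ‖x'‖) := by
        gcongr; exact (toEuclideanCLM (𝕜 := ℝ) A).le_opNorm x'
      _ = _ := by ring
  simp only [star_trivial, sub_mulVec, smul_mulVec, one_mulVec, dotProduct_sub,
    dotProduct_smul, smul_eq_mul]
  linarith

theorem smul_add_smul_le_smul_one {A B : Matrix m m ℝ} (hA : A.PosSemidef)
    (hB : B.PosSemidef) {α β : ℝ} (hα : 0 ≤ α) (hβ : 0 ≤ β) :
    β • A + α • B ≤ ((α + β) * ‖toEuclideanCLM (𝕜 := ℝ) (A + B)‖) • (1 : Matrix m m ℝ) :=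
  calc β • A + α • B ≤ (α + β) • (A + B) := smul_add_smul_le_add_smul_add hA hB hα hβ
    _ ≤ (α + β) • (‖toEuclideanCLM (𝕜 := ℝ) (A + B)‖ • 1) :=
      smul_le_smul_of_nonneg_left (hA.add hB).isHermitian.le_norm_smul_one (add_nonneg hα hβ)
    _ = _ := smul_smul _ _ _

end Matrix

theorem tendsto_div_natCast_add_one_rpow (c : ℝ) {τ : ℝ} (hτ : 0 < τ) :
    Tendsto (fun t : ℕ => c / ((t : ℝ) + 1) ^ τ) atTop (𝓝 0) :=
  tendsto_const_nhds.div_atTop <| (tendsto_rpow_atTop hτ).comp <|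
    tendsto_atTop_add_const_right _ 1 tendsto_natCast_atTop_atTop

theorem exists_M0_loewner_bounds_general {N n : ℕ}
    (L : Matrix (Fin N) (Fin N) ℝ)
    (hLpsd : L.PosSemidef)
    (DH : Matrix (Fin N × Fin n) (Fin N × Fin n) ℝ)
    (hDHpsd : DH.PosSemidef)
    (hpos : (L ⊗ₖ (1 : Matrix (Fin n) (Fin n) ℝ) + DH).PosDef)
    (a b τ1 τ2 : ℝ) (ha : 0 < a) (hb : 0 < b)
    (hτ2 : 0 < τ2) (hτ21 : τ2 ≤ τ1) :
    ∃ (M0 : Matrix (Fin N × Fin n) (Fin N × Fin n) ℝ) (T : ℕ), M0.PosDef ∧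
      ∀ t : ℕ, T < t →
        ((b / ((t : ℝ) + 1) ^ τ2) • (L ⊗ₖ (1 : Matrix (Fin n) (Fin n) ℝ))
            + (a / ((t : ℝ) + 1) ^ τ1) • DH
            - (a / ((t : ℝ) + 1) ^ τ1) • M0).PosSemidef ∧
        ((1 : Matrix (Fin N × Fin n) (Fin N × Fin n) ℝ)
            - ((b / ((t : ℝ) + 1) ^ τ2) • (L ⊗ₖ (1 : Matrix (Fin n) (Fin n) ℝ))
              + (a / ((t : ℝ) + 1) ^ τ1) • DH)).PosDef := by
  set Lk := L ⊗ₖ (1 : Matrix (Fin n) (Fin n) ℝ)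
  have hLk : Lk.PosSemidef := hLpsd.kronecker PosSemidef.one
  have hsmall : Tendsto (fun t : ℕ => (a / ((t : ℝ) + 1) ^ τ1 + b / ((t : ℝ) + 1) ^ τ2) *
      ‖toEuclideanCLM (𝕜 := ℝ) (Lk + DH)‖) atTop (𝓝 0) := by
    simpa using ((tendsto_div_natCast_add_one_rpow a (hτ2.trans_le hτ21)).add
      (tendsto_div_natCast_add_one_rpow b hτ2)).mul_const _
  obtain ⟨T, hT⟩ := eventually_atTop.mp (hsmall.eventually_lt_const one_pos)
  refine ⟨(b / a) • Lk + DH, T, posDef_smul_add_of_posDef_add hLk hDHpsd hpos (div_pos hb ha),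
    fun t ht => ⟨?_, ?_⟩⟩
  · have hbase : (1 : ℝ) ≤ t + 1 := le_add_of_nonneg_left t.cast_nonneg
    refine smul_smul_add_le_smul_add_smul hLk ?_
    calc a / ((t : ℝ) + 1) ^ τ1 * (b / a) = b / ((t : ℝ) + 1) ^ τ1 := by field_simp
      _ ≤ b / ((t : ℝ) + 1) ^ τ2 := div_le_div_of_nonneg_left hb.le (by positivity)
          (Real.rpow_le_rpow_of_exponent_le hbase hτ21)
  · exact posDef_one_sub_of_le_smul_one
      (smul_add_smul_le_smul_one hLk hDHpsd (by positivity) (by positivity)) (hT t ht.le)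

theorem exists_M0_loewner_bounds {N n : ℕ} (hN : 0 < N)
    (L : Matrix (Fin N) (Fin N) ℝ)
    (hLpsd : L.PosSemidef)
    (hL1 : L *ᵥ (fun _ => (1 : ℝ)) = 0)
    (hker : ∀ x : Fin N → ℝ, L *ᵥ x = 0 → ∃ c : ℝ, x = fun _ => c)
    (DH : Matrix (Fin N × Fin n) (Fin N × Fin n) ℝ)
    (hDHblock : ∀ p q : Fin N × Fin n, p.1 ≠ q.1 → DH p q = 0)
    (hDHpsd : DH.PosSemidef)
    (hpos : (L ⊗ₖ (1 : Matrix (Fin n) (Fin n) ℝ) + DH).PosDef)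
    (a b τ1 τ2 : ℝ) (ha : 0 < a) (hb : 0 < b)
    (hτ2 : 0 < τ2) (hτ21 : τ2 ≤ τ1) (hτ1 : τ1 ≤ 1) :
    ∃ (M0 : Matrix (Fin N × Fin n) (Fin N × Fin n) ℝ) (T : ℕ), M0.PosDef ∧
      ∀ t : ℕ, T < t →
        ((b / ((t : ℝ) + 1) ^ τ2) • (L ⊗ₖ (1 : Matrix (Fin n) (Fin n) ℝ))
            + (a / ((t : ℝ) + 1) ^ τ1) • DH
            - (a / ((t : ℝ) + 1) ^ τ1) • M0).PosSemidef ∧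
        ((1 : Matrix (Fin N × Fin n) (Fin N × Fin n) ℝ)
            - ((b / ((t : ℝ) + 1) ^ τ2) • (L ⊗ₖ (1 : Matrix (Fin n) (Fin n) ℝ))
              + (a / ((t : ℝ) + 1) ^ τ1) • DH)).PosDef :=
  exists_M0_loewner_bounds_general L hLpsd DH hDHpsd hpos a b τ1 τ2 ha hb hτ2 hτ21
end

section
/- Let e : ℕ → ℝ^d satisfy the recursion e(t+1) = P(t) e(t) + w(t), where for all t larger than some T, P(t) is a symmetric matrix with ‖P(t)‖ ≤ 1 − a m_0/(t+1)^{τ1} (with a, m_0 > 0, 0 < τ1 < 1) and ‖w(t)‖ ≤ c/(t+1)^{σ} with c > 0 and σ > τ1. Then lim_{t→∞} ‖e(t)‖ = 0. -/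
/-!
Taking norms turns the vector recursion into the scalar inequality
`u (t+1) ≤ (1 - α t) u t + β t` with `α t = a m0 / (t+1)^τ1`, `β t = c / (t+1)^σ`.
Since `τ1 < 1` the series `∑ α` diverges, and since `σ > τ1` we have `β = o(α)`.
For any `ε > 0` the excess `max (u t - ε) 0` then eventually contracts by the factor
`1 - α t ≤ exp (-α t)`, so it is bounded by a multiple of `exp (-∑_{s<t} α s) → 0`.
-/

open Filter Matrix Finset Asymptotics Topology

theorem not_summable_const_div_nat_add_one_rpow {k τ : ℝ} (hk : k ≠ 0) (hτ : τ ≤ 1) :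
    ¬Summable fun t : ℕ => k / ((t : ℝ) + 1) ^ τ := by
  intro h
  have : Summable fun t : ℕ => 1 / ((t + 1 : ℕ) : ℝ) ^ τ := by
    simpa [div_div_cancel_left' hk] using h.div_const k
  exact hτ.not_gt (Real.summable_one_div_nat_rpow.1 ((summable_nat_add_iff 1).1 this))

theorem isLittleO_const_div_rpow_atTop {σ τ : ℝ} (h : τ < σ) (c : ℝ) {k : ℝ} (hk : k ≠ 0) :
    (fun x : ℝ => c / x ^ σ) =o[atTop] fun x => k / x ^ τ := by
  refine (isLittleO_iff_tendsto' ?_).2 ?_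
  · filter_upwards [eventually_gt_atTop 0] with x hx h0
    exact absurd h0 (div_ne_zero hk (Real.rpow_pos_of_pos hx τ).ne')
  · have : Tendsto (fun x : ℝ => c / k * x ^ (-(σ - τ))) atTop (𝓝 0) := by
      simpa using (tendsto_rpow_neg_atTop (sub_pos.2 h)).const_mul (c / k)
    refine this.congr' ?_
    filter_upwards [eventually_gt_atTop 0] with x hx
    rw [neg_sub, Real.rpow_sub hx]
    field_simp

theorem max_sub_le_one_sub_mul_max_sub {u u' α β ε : ℝ} (hα : α ≤ 1) (hβ : β ≤ ε * α)
    (h : u' ≤ (1 - α) * u + β) : max (u' - ε) 0 ≤ (1 - α) * max (u - ε) 0 := by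
  have hα' : 0 ≤ 1 - α := sub_nonneg.2 hα
  refine max_le ?_ (mul_nonneg hα' (le_max_right _ _))
  calc u' - ε ≤ (1 - α) * (u - ε) := by linarith
    _ ≤ (1 - α) * max (u - ε) 0 := mul_le_mul_of_nonneg_left (le_max_left _ _) hα'

theorem tendsto_zero_of_le_one_sub_mul {v α : ℕ → ℝ} (hv : ∀ t, 0 ≤ v t)
    (hα : Tendsto (fun n => ∑ i ∈ range n, α i) atTop atTop)
    (hrec : ∀ᶠ t in atTop, v (t + 1) ≤ (1 - α t) * v t) :
    Tendsto v atTop (𝓝 0) := by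
  set S : ℕ → ℝ := fun n => ∑ i ∈ range n, α i
  obtain ⟨N, hN⟩ := hrec.exists_forall_of_atTop
  have hmono : ∀ t, N ≤ t → v t * Real.exp (S t) ≤ v N * Real.exp (S N) := by
    intro t ht
    induction t, ht using Nat.le_induction with
    | base => rfl
    | succ t ht ih =>
      have hexp : (1 - α t) * Real.exp (α t) ≤ 1 := by
        have := Real.add_one_le_exp (-α t)
        rw [← le_div_iff₀ (Real.exp_pos _), one_div, ← Real.exp_neg]
        linarith
      calc v (t + 1) * Real.exp (S (t + 1))
          = v (t + 1) * (Real.exp (S t) * Real.exp (α t)) := by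
            simp only [S, sum_range_succ, Real.exp_add]
        _ ≤ (1 - α t) * v t * (Real.exp (S t) * Real.exp (α t)) := by
            gcongr; exact hN t ht
        _ = (1 - α t) * Real.exp (α t) * (v t * Real.exp (S t)) := by ring
        _ ≤ v t * Real.exp (S t) :=
            mul_le_of_le_one_left (mul_nonneg (hv t) (Real.exp_pos _).le) hexp
        _ ≤ v N * Real.exp (S N) := ih
  have hdecay : Tendsto (fun t => v N * Real.exp (S N) * Real.exp (-S t)) atTop (𝓝 0) := by
    simpa using (Real.tendsto_exp_atBot.comp (tendsto_neg_atTop_atBot.comp hα)).const_mul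
      (v N * Real.exp (S N))
  refine squeeze_zero' (Eventually.of_forall hv) ?_ hdecay
  filter_upwards [eventually_ge_atTop N] with t ht
  rw [Real.exp_neg, ← div_eq_mul_inv, le_div_iff₀ (Real.exp_pos _)]
  exact hmono t ht

theorem tendsto_zero_of_le_one_sub_mul_add {u α β : ℕ → ℝ} (hu : ∀ t, 0 ≤ u t)
    (hα0 : ∀ t, 0 ≤ α t) (hα : ¬Summable α) (hα1 : ∀ᶠ t in atTop, α t ≤ 1)
    (hβ : β =o[atTop] α) (hrec : ∀ᶠ t in atTop, u (t + 1) ≤ (1 - α t) * u t + β t) :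
    Tendsto u atTop (𝓝 0) := by
  have hS := (not_summable_iff_tendsto_nat_atTop_of_nonneg hα0).1 hα
  refine tendsto_order.2 ⟨fun ε hε => Eventually.of_forall fun t => hε.trans_le (hu t),
    fun ε hε => ?_⟩
  have hβε : ∀ᶠ t in atTop, β t ≤ ε / 2 * α t := by
    filter_upwards [hβ.bound (half_pos hε)] with t ht
    simpa [Real.norm_eq_abs, abs_of_nonneg (hα0 t)] using (le_abs_self (β t)).trans ht
  have hv : Tendsto (fun t => max (u t - ε / 2) 0) atTop (𝓝 0) := by
    refine tendsto_zero_of_le_one_sub_mul (fun t => le_max_right _ _) hS ?_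
    filter_upwards [hα1, hβε, hrec] with t h1 h2 h3
    exact max_sub_le_one_sub_mul_max_sub h1 h2 h3
  filter_upwards [hv.eventually (gt_mem_nhds (half_pos hε))] with t ht
  linarith [le_max_left (u t - ε / 2) 0]

theorem error_recursion_tendsto_zero_general {d : ℕ}
    (e : ℕ → EuclideanSpace ℝ (Fin d))
    (P : ℕ → Matrix (Fin d) (Fin d) ℝ)
    (w : ℕ → EuclideanSpace ℝ (Fin d))
    (a m0 τ1 c σ : ℝ) (T : ℕ)
    (ha : 0 < a) (hm0 : 0 < m0) (hτ1' : τ1 < 1)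
    (hσ : τ1 < σ)
    (hrec : ∀ t : ℕ, e (t + 1) = (Matrix.toEuclideanCLM (𝕜 := ℝ) (P t)) (e t) + w t)
    (hPnorm : ∀ t : ℕ, T < t →
      ‖Matrix.toEuclideanCLM (𝕜 := ℝ) (P t)‖ ≤ 1 - a * m0 / ((t : ℝ) + 1) ^ τ1)
    (hw : ∀ t : ℕ, T < t → ‖w t‖ ≤ c / ((t : ℝ) + 1) ^ σ) :
    Tendsto (fun t : ℕ => ‖e t‖) atTop (nhds 0) := by
  have ham : a * m0 ≠ 0 := (mul_pos ha hm0).ne'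
  have hshift : Tendsto (fun t : ℕ => (t : ℝ) + 1) atTop atTop :=
    tendsto_atTop_add_const_right _ 1 tendsto_natCast_atTop_atTop
  refine tendsto_zero_of_le_one_sub_mul_add (fun t => norm_nonneg _) (fun t => by positivity)
    (not_summable_const_div_nat_add_one_rpow ham hτ1'.le) ?_
    ((isLittleO_const_div_rpow_atTop hσ c ham).comp_tendsto hshift) ?_
  · filter_upwards [eventually_gt_atTop T] with t ht
    linarith [hPnorm t ht, norm_nonneg (Matrix.toEuclideanCLM (𝕜 := ℝ) (P t))]
  · filter_upwards [eventually_gt_atTop T] with t ht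
    rw [hrec t]
    refine (norm_add_le _ _).trans (add_le_add ?_ (hw t ht))
    exact ((Matrix.toEuclideanCLM (𝕜 := ℝ) (P t)).le_opNorm _).trans
      (by gcongr; exact hPnorm t ht)

theorem error_recursion_tendsto_zero {d : ℕ}
    (e : ℕ → EuclideanSpace ℝ (Fin d))
    (P : ℕ → Matrix (Fin d) (Fin d) ℝ)
    (w : ℕ → EuclideanSpace ℝ (Fin d))
    (a m0 τ1 c σ : ℝ) (T : ℕ)
    (ha : 0 < a) (hm0 : 0 < m0) (hτ1 : 0 < τ1) (hτ1' : τ1 < 1)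
    (hc : 0 < c) (hσ : τ1 < σ)
    (hrec : ∀ t : ℕ, e (t + 1) = (Matrix.toEuclideanCLM (𝕜 := ℝ) (P t)) (e t) + w t)
    (hPsymm : ∀ t : ℕ, T < t → (P t).IsSymm)
    (hPnorm : ∀ t : ℕ, T < t →
      ‖Matrix.toEuclideanCLM (𝕜 := ℝ) (P t)‖ ≤ 1 - a * m0 / ((t : ℝ) + 1) ^ τ1)
    (hw : ∀ t : ℕ, T < t → ‖w t‖ ≤ c / ((t : ℝ) + 1) ^ σ) :
    Tendsto (fun t : ℕ => ‖e t‖) atTop (nhds 0) :=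
  error_recursion_tendsto_zero_general e P w a m0 τ1 c σ T ha hm0 hτ1' hσ hrec hPnorm hw
end

section
/- Let u : ℕ → ℝ^n satisfy the centralized estimator recursion u(t+1) = u(t) + (α_c(t)/N) Σ_{i=1}^N H_i^T (y_i(t) − H_i u(t)), where y_i(t) = H_i θ + v_i(t), the v_i(t) are zero-mean i.i.d. over time with finite (2+ε)-moments, G = Σ_i H_i^T H_i is positive definite, α_c(t) = a_c/(t+1)^{τ_c} with a_c > 0 and 1/2 < τ_c ≤ 1. Then u(t) → θ almost surely. -/
open Filter Finset Matrix Topology MeasureTheory ProbabilityTheory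
open scoped RealInnerProductSpace

/-!
With `e t = u t - θ`, `G = ∑ i, (H i)ᵀ * H i` and `γ t = a_c / (N (t + 1) ^ τ_c)`, the recursion
reads `e (t + 1) = e t - γ t • G e t + γ t • ∑ i, (H i)ᵀ v i t`. Since `∑ γ t ^ 2 < ∞`, the noise
series `∑ γ t • ∑ i, (H i)ᵀ v i t` is an `L²`-bounded martingale, hence converges almost surely
(Kolmogorov's criterion, coordinatewise). On such a sample path let `r t` be the tail of the noise
series. Then `y = e + r` satisfies `y (t + 1) = y t - γ t • G (y t - r t)`, and coercivity of the
positive definite `G` gives `‖y (t + 1)‖ ≤ (1 - λ γ t / 2) ‖y t‖ + γ t ‖G‖ ‖r t‖` for large `t`.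
As `∑ γ t = ∞` and `r t → 0`, this forces `y → 0`, hence `e → 0`.
-/

lemma le_exp_neg_sum_mul_of_le_one_sub_mul {a c : ℕ → ℝ} (ha : ∀ t, a t ≤ 1)
    (hc : ∀ t, c (t + 1) ≤ (1 - a t) * c t) (t : ℕ) :
    c t ≤ Real.exp (-∑ j ∈ range t, a j) * max (c 0) 0 := by
  induction t with
  | zero => simp
  | succ t ih =>
    have hM : 0 ≤ Real.exp (-∑ j ∈ range t, a j) * max (c 0) 0 := by positivity
    calc c (t + 1) ≤ (1 - a t) * (Real.exp (-∑ j ∈ range t, a j) * max (c 0) 0) :=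
          (hc t).trans (mul_le_mul_of_nonneg_left ih (by linarith [ha t]))
      _ ≤ Real.exp (-a t) * (Real.exp (-∑ j ∈ range t, a j) * max (c 0) 0) :=
          mul_le_mul_of_nonneg_right (by linarith [Real.add_one_le_exp (-a t)]) hM
      _ = Real.exp (-∑ j ∈ range (t + 1), a j) * max (c 0) 0 := by
          rw [sum_range_succ, ← mul_assoc, ← Real.exp_add]; ring_nf

lemma eventually_lt_of_le_one_sub_mul {a c : ℕ → ℝ} (ha : ∀ t, a t ≤ 1)
    (hsum : Tendsto (fun t => ∑ j ∈ range t, a j) atTop atTop)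
    (hc : ∀ t, c (t + 1) ≤ (1 - a t) * c t) {η : ℝ} (hη : 0 < η) :
    ∀ᶠ t in atTop, c t < η := by
  have hlim :
      Tendsto (fun t => Real.exp (-∑ j ∈ range t, a j) * max (c 0) 0) atTop (𝓝 0) := by
    simpa using (Real.tendsto_exp_atBot.comp (tendsto_neg_atTop_atBot.comp hsum)).mul_const
      (max (c 0) 0)
  filter_upwards [hlim.eventually (eventually_lt_nhds hη)] with t ht
  exact (le_exp_neg_sum_mul_of_le_one_sub_mul ha hc t).trans_lt ht

lemma tendsto_sum_range_add_atTop {f : ℕ → ℝ}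
    (hf : Tendsto (fun t => ∑ j ∈ range t, f j) atTop atTop) (T : ℕ) :
    Tendsto (fun t => ∑ j ∈ range t, f (T + j)) atTop atTop := by
  simp_rw [← sum_range_add_sub_sum_range f T]
  exact tendsto_atTop_add_const_right _ _ (hf.comp (tendsto_add_atTop_nat T)) |>.congr
    fun t => by rw [Function.comp_apply, add_comm t T, sub_eq_add_neg]

lemma tendsto_zero_of_le_one_sub_mul_add_s8 {γ δ b : ℕ → ℝ} {ρ : ℝ} (hρ : 0 < ρ)
    (hγ : ∀ t, 0 ≤ γ t) (hργ : ∀ᶠ t in atTop, ρ * γ t ≤ 1)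
    (hγsum : Tendsto (fun t => ∑ j ∈ range t, γ j) atTop atTop)
    (hb : ∀ t, 0 ≤ b t) (hδ : Tendsto δ atTop (𝓝 0))
    (hrec : ∀ᶠ t in atTop, b (t + 1) ≤ (1 - ρ * γ t) * b t + γ t * δ t) :
    Tendsto b atTop (𝓝 0) := by
  refine tendsto_order.2 ⟨fun a ha => .of_forall fun t => ha.trans_le (hb t), fun ε hε => ?_⟩
  have hδε : ∀ᶠ t in atTop, δ t ≤ ρ * (ε / 2) :=
    hδ.eventually (eventually_le_nhds (by positivity))
  obtain ⟨T, hT⟩ := eventually_atTop.1 (hργ.and (hrec.and hδε))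
  -- past `T`, the excess `b - ε / 2` contracts by the factor `1 - ρ γ`
  have hc : ∀ k, b (T + (k + 1)) - ε / 2 ≤ (1 - ρ * γ (T + k)) * (b (T + k) - ε / 2) := by
    intro k
    obtain ⟨-, hb', hδ'⟩ := hT (T + k) le_self_add
    rw [← add_assoc]
    nlinarith [mul_le_mul_of_nonneg_left hδ' (hγ (T + k))]
  have hev := eventually_lt_of_le_one_sub_mul (c := fun k => b (T + k) - ε / 2)
    (fun k => (hT (T + k) le_self_add).1)
    (by simpa [← mul_sum] using (tendsto_sum_range_add_atTop hγsum T).const_mul_atTop hρ) hc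
    (half_pos hε)
  filter_upwards [(tendsto_sub_atTop_nat T).eventually hev, eventually_ge_atTop T]
    with t ht hTt
  rw [Nat.add_sub_cancel' hTt] at ht
  linarith

lemma tendsto_div_natCast_add_one_rpow_nhds_zero (a : ℝ) {τ : ℝ} (hτ : 0 < τ) :
    Tendsto (fun t : ℕ => a / ((t : ℝ) + 1) ^ τ) atTop (𝓝 0) :=
  tendsto_const_nhds.div_atTop <| (tendsto_rpow_atTop hτ).comp <|
    tendsto_atTop_add_const_right _ 1 tendsto_natCast_atTop_atTop

lemma tendsto_sum_range_div_natCast_add_one_rpow_atTop {a τ : ℝ} (ha : 0 < a) (hτ : τ ≤ 1) :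
    Tendsto (fun T => ∑ t ∈ range T, a / ((t : ℝ) + 1) ^ τ) atTop atTop := by
  refine (not_summable_iff_tendsto_nat_atTop_of_nonneg fun t => by positivity).1 fun hs => ?_
  have : Summable fun t : ℕ => 1 / (t : ℝ) ^ τ :=
    (summable_nat_add_iff 1).1 <| by simpa [div_eq_mul_inv, ha.ne'] using hs.mul_left a⁻¹
  exact absurd (Real.summable_one_div_nat_rpow.1 this) (not_lt.2 hτ)

lemma summable_div_natCast_add_one_rpow_sq (a : ℝ) {τ : ℝ} (hτ : 1 / 2 < τ) :
    Summable fun t : ℕ => (a / ((t : ℝ) + 1) ^ τ) ^ 2 := by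
  have h := ((summable_nat_add_iff 1).2 (Real.summable_one_div_nat_rpow.2
    (by linarith : 1 < 2 * τ))).mul_left (a ^ 2)
  refine h.congr fun t => ?_
  rw [div_pow, ← Real.rpow_mul_natCast (by positivity)]
  push_cast
  ring_nf

section InnerProductSpace

variable {E : Type*} [NormedAddCommGroup E] [InnerProductSpace ℝ E]

lemma exists_pos_mul_sq_norm_le_inner_self_apply [FiniteDimensional ℝ E] {A : E →L[ℝ] E}
    (hA : ∀ z ≠ 0, 0 < ⟪z, A z⟫) : ∃ lam > 0, ∀ z, lam * ‖z‖ ^ 2 ≤ ⟪z, A z⟫ := by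
  rcases (Metric.sphere (0 : E) 1).eq_empty_or_nonempty with hS | hS
  · refine ⟨1, one_pos, fun z => ?_⟩
    obtain rfl : z = 0 := by
      by_contra hz
      have : ‖z‖⁻¹ • z ∈ Metric.sphere (0 : E) 1 := by
        simp [norm_smul, inv_mul_cancel₀ (norm_ne_zero_iff.2 hz)]
      simp [hS] at this
    simp
  obtain ⟨z₀, hz₀, hmin⟩ := (isCompact_sphere (0 : E) 1).exists_isMinOn hS
    (by fun_prop : Continuous fun z => ⟪z, A z⟫).continuousOn
  have hz₀ : ‖z₀‖ = 1 := by simpa using hz₀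
  refine ⟨⟪z₀, A z₀⟫, hA z₀ (norm_ne_zero_iff.1 (by simp [hz₀])), fun z => ?_⟩
  rcases eq_or_ne z 0 with rfl | hz
  · simp
  have hnz : ‖z‖ ≠ 0 := norm_ne_zero_iff.2 hz
  have hmem : ‖z‖⁻¹ • z ∈ Metric.sphere (0 : E) 1 := by simp [norm_smul, inv_mul_cancel₀ hnz]
  have h : ⟪z₀, A z₀⟫ ≤ ⟪‖z‖⁻¹ • z, A (‖z‖⁻¹ • z)⟫ := hmin hmem
  simp only [map_smul, inner_smul_left, inner_smul_right, RCLike.conj_to_real] at h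
  calc ⟪z₀, A z₀⟫ * ‖z‖ ^ 2 ≤ ‖z‖⁻¹ * (‖z‖⁻¹ * ⟪z, A z⟫) * ‖z‖ ^ 2 := by gcongr
    _ = ⟪z, A z⟫ := by field_simp

lemma norm_sub_smul_apply_le {A : E →L[ℝ] E} {lam c : ℝ}
    (hA : ∀ z, lam * ‖z‖ ^ 2 ≤ ⟪z, A z⟫) (hc : 0 ≤ c) (hcA : c * ‖A‖ ^ 2 ≤ lam)
    (hclam : c * lam ≤ 1) (z : E) :
    ‖z - c • A z‖ ≤ (1 - c * lam / 2) * ‖z‖ := by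
  have hAz : ‖A z‖ ^ 2 ≤ ‖A‖ ^ 2 * ‖z‖ ^ 2 := by
    rw [← mul_pow]; gcongr; exact A.le_opNorm z
  have hsq : ‖z - c • A z‖ ^ 2 ≤ (1 - c * lam) * ‖z‖ ^ 2 := by
    rw [norm_sub_sq_real, inner_smul_right, norm_smul, mul_pow, Real.norm_eq_abs, sq_abs]
    nlinarith [mul_le_mul_of_nonneg_left (hA z) hc, mul_le_mul_of_nonneg_left hAz (sq_nonneg c),
      mul_le_mul_of_nonneg_right (mul_le_mul_of_nonneg_left hcA hc) (sq_nonneg ‖z‖)]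
  refine le_of_pow_le_pow_left₀ two_ne_zero (by nlinarith [norm_nonneg z]) (hsq.trans ?_)
  nlinarith [sq_nonneg (c * lam * ‖z‖)]

theorem tendsto_zero_of_eq_sub_smul_add {A : E →L[ℝ] E} {lam : ℝ} (hlam : 0 < lam)
    (hA : ∀ z, lam * ‖z‖ ^ 2 ≤ ⟪z, A z⟫) {γ : ℕ → ℝ} (hγ0 : ∀ t, 0 ≤ γ t)
    (hγ : Tendsto γ atTop (𝓝 0)) (hγsum : Tendsto (fun t => ∑ j ∈ range t, γ j) atTop atTop)
    {d e : ℕ → E} {l : E} (hd : Tendsto (fun t => ∑ j ∈ range t, d j) atTop (𝓝 l))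
    (he : ∀ t, e (t + 1) = e t - γ t • A (e t) + d t) :
    Tendsto e atTop (𝓝 0) := by
  set r : ℕ → E := fun t => l - ∑ j ∈ range t, d j
  have hr : Tendsto r atTop (𝓝 0) := by
    simpa only [sub_self] using (tendsto_const_nhds (x := l)).sub hd
  have hy : ∀ t,
      e (t + 1) + r (t + 1) = (e t + r t) - γ t • A (e t + r t) + γ t • A (r t) := by
    intro t
    simp only [r, he, sum_range_succ, map_add, smul_add]
    abel
  have hsmall : ∀ᶠ t in atTop, γ t * ‖A‖ ^ 2 ≤ lam ∧ γ t * lam ≤ 1 := by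
    refine (hγ.mul_const _).eventually (eventually_le_nhds ?_) |>.and
      ((hγ.mul_const _).eventually (eventually_le_nhds ?_)) <;> simp [hlam]
  have hnorm : ∀ᶠ t in atTop, ‖e (t + 1) + r (t + 1)‖
      ≤ (1 - lam / 2 * γ t) * ‖e t + r t‖ + γ t * (‖A‖ * ‖r t‖) := by
    filter_upwards [hsmall] with t ⟨h1, h2⟩
    rw [hy]
    refine (norm_add_le _ _).trans (add_le_add ?_ ?_)
    · exact (norm_sub_smul_apply_le hA (hγ0 t) h1 h2 _).trans_eq (by ring)
    · rw [norm_smul, Real.norm_of_nonneg (hγ0 t)]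
      exact mul_le_mul_of_nonneg_left (A.le_opNorm _) (hγ0 t)
  have hργ : ∀ᶠ t in atTop, lam / 2 * γ t ≤ 1 := by
    filter_upwards [hsmall] with t ⟨_, h⟩
    nlinarith [hγ0 t]
  have hy0 := tendsto_zero_of_le_one_sub_mul_add_s8 (b := fun t => ‖e t + r t‖) (half_pos hlam)
    hγ0 hργ hγsum (fun t => norm_nonneg _) (by simpa using hr.norm.const_mul ‖A‖) hnorm
  simpa using (tendsto_zero_iff_norm_tendsto_zero.2 hy0).sub hr

end InnerProductSpace

lemma Matrix.PosDef.exists_pos_mul_sq_norm_le_inner_toEuclideanCLM {n : Type*} [Fintype n]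
    [DecidableEq n] {G : Matrix n n ℝ} (hG : G.PosDef) :
    ∃ lam > 0, ∀ z, lam * ‖z‖ ^ 2 ≤ ⟪z, toEuclideanCLM (𝕜 := ℝ) G z⟫ :=
  exists_pos_mul_sq_norm_le_inner_self_apply fun z hz => by
    simpa [inner_toEuclideanCLM] using
      hG.dotProduct_mulVec_pos (x := WithLp.ofLp z) (by simpa using hz)

section Observations

variable {ι n : Type*} [Fintype ι] [Fintype n] {κ : ι → Type*} [∀ i, Fintype (κ i)]

noncomputable def sumTransposeMulVec (H : ∀ i, Matrix (κ i) n ℝ) :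
    (∀ i, κ i → ℝ) →L[ℝ] EuclideanSpace ℝ n :=
  LinearMap.toContinuousLinearMap
    { toFun := fun w => WithLp.toLp 2 (∑ i, (H i)ᵀ *ᵥ w i)
      map_add' := fun w w' => by simp [mulVec_add, sum_add_distrib]
      map_smul' := fun c w => by simp [mulVec_smul, smul_sum] }

lemma sumTransposeMulVec_apply (H : ∀ i, Matrix (κ i) n ℝ) (w : ∀ i, κ i → ℝ) :
    sumTransposeMulVec H w = WithLp.toLp 2 (∑ i, (H i)ᵀ *ᵥ w i) := rfl

lemma sub_toLp_eq_of_forall_apply_eq [DecidableEq n] (H : ∀ i, Matrix (κ i) n ℝ) (θ : n → ℝ)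
    (w : ∀ i, κ i → ℝ) {c : ℝ} {x x' : EuclideanSpace ℝ n}
    (h : ∀ q,
      x' q = x q + c * (∑ i, ((H i)ᵀ *ᵥ (H i *ᵥ θ + w i - H i *ᵥ fun r => x r)) q)) :
    x' - WithLp.toLp 2 θ = (x - WithLp.toLp 2 θ)
      - c • toEuclideanCLM (𝕜 := ℝ) (∑ i, (H i)ᵀ * H i) (x - WithLp.toLp 2 θ)
      + c • sumTransposeMulVec H w := by
  ext q
  simp [h, sumTransposeMulVec_apply, mulVec_add, mulVec_sub, mulVec_mulVec, sum_add_distrib,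
    sum_sub_distrib]
  ring

end Observations

section Probability

variable {Ω : Type*} [MeasurableSpace Ω] {μ : Measure Ω}

lemma memLp_two_of_integrable_norm_rpow [IsFiniteMeasure μ] {F : Type*} [NormedAddCommGroup F]
    {f : Ω → F} (hf : AEStronglyMeasurable f μ) {ε : ℝ} (hε : 0 < ε)
    (h : Integrable (fun ω => ‖f ω‖ ^ (2 + ε)) μ) : MemLp f 2 μ := by
  have hp : (ENNReal.ofReal (2 + ε)).toReal = 2 + ε := ENNReal.toReal_ofReal (by positivity)
  refine ((integrable_norm_rpow_iff hf (p := ENNReal.ofReal (2 + ε)) (by simp; positivity)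
    ENNReal.ofReal_ne_top).1 (by rwa [hp])).mono_exponent ?_
  rw [← ENNReal.ofReal_ofNat]
  exact ENNReal.ofReal_le_ofReal (by linarith)

lemma martingale_sum_range_succ_of_iIndepFun {X : ℕ → Ω → ℝ}
    (hX : ∀ t, StronglyMeasurable (X t)) (hind : iIndepFun X μ)
    (hint : ∀ t, Integrable (X t) μ) (hmean : ∀ t, μ[X t] = 0) :
    Martingale (fun T => ∑ t ∈ range (T + 1), X t) (Filtration.natural X hX) μ := by
  have := hind.isProbabilityMeasure
  refine martingale_of_condExp_sub_eq_zero_nat (fun T => Finset.stronglyMeasurable_sum _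
    fun t ht => (Filtration.stronglyAdapted_natural hX t).mono
      ((Filtration.natural X hX).mono (Nat.lt_succ_iff.1 (mem_range.1 ht))))
    (fun T => integrable_finsetSum' _ fun t _ => hint t) fun T => ?_
  rw [sum_range_succ_sub_sum]
  filter_upwards [hind.condExp_natural_ae_eq_of_lt hX (Nat.lt_succ_self T)] with ω hω
  simp [hω, hmean]

lemma eLpNorm_one_le_one_add_integral_sq_div_two [IsProbabilityMeasure μ] {f : Ω → ℝ}
    (hf : MemLp f 2 μ) : eLpNorm f 1 μ ≤ ENNReal.ofReal ((1 + ∫ ω, f ω ^ 2 ∂μ) / 2) := by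
  have hint : Integrable f μ := hf.integrable one_le_two
  rw [eLpNorm_one_eq_lintegral_enorm, ← ofReal_integral_norm_eq_lintegral_enorm hint]
  refine ENNReal.ofReal_le_ofReal ?_
  calc ∫ ω, ‖f ω‖ ∂μ ≤ ∫ ω, (1 + f ω ^ 2) / 2 ∂μ := by
        refine integral_mono hint.norm (((integrable_const 1).add hf.integrable_sq).div_const 2)
          fun ω => ?_
        nlinarith [sq_abs (f ω), sq_nonneg (|f ω| - 1), Real.norm_eq_abs (f ω)]
    _ = (1 + ∫ ω, f ω ^ 2 ∂μ) / 2 := by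
        rw [integral_div, integral_add (integrable_const 1) hf.integrable_sq]
        simp

theorem ae_exists_tendsto_sum_range_of_iIndepFun {X : ℕ → Ω → ℝ} (hX : ∀ t, Measurable (X t))
    (hind : iIndepFun X μ) (hL2 : ∀ t, MemLp (X t) 2 μ) (hmean : ∀ t, μ[X t] = 0)
    (hvar : Summable fun t => Var[X t; μ]) :
    ∀ᵐ ω ∂μ, ∃ l, Tendsto (fun T => ∑ t ∈ range T, X t ω) atTop (𝓝 l) := by
  have := hind.isProbabilityMeasure
  have hmart := martingale_sum_range_succ_of_iIndepFun (fun t => (hX t).stronglyMeasurable) hind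
    (fun t => (hL2 t).integrable one_le_two) hmean
  have hsq : ∀ T, ∫ ω, (∑ t ∈ range T, X t) ω ^ 2 ∂μ ≤ ∑' t, Var[X t; μ] := by
    intro T
    rw [← variance_of_integral_eq_zero, IndepFun.variance_sum]
    · exact hvar.sum_le_tsum _ fun t _ => variance_nonneg _ _
    · exact fun t _ => hL2 t
    · exact fun i _ j _ hij => hind.indepFun hij
    · exact Finset.aemeasurable_sum _ fun t _ => (hX t).aemeasurable
    · simp only [Finset.sum_apply]
      rw [integral_finsetSum _ fun t _ => (hL2 t).integrable one_le_two]
      simp [hmean]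
  have hbdd : ∀ T,
      eLpNorm (∑ t ∈ range (T + 1), X t) 1 μ ≤ ((1 + ∑' t, Var[X t; μ]) / 2).toNNReal :=
    fun T => (eLpNorm_one_le_one_add_integral_sq_div_two
      (memLp_finsetSum' _ fun t _ => hL2 t)).trans
        (ENNReal.ofReal_le_ofReal (by linarith [hsq (T + 1)]))
  filter_upwards [hmart.submartingale.exists_ae_tendsto_of_bdd hbdd] with ω ⟨l, hl⟩
  exact ⟨l, (tendsto_add_atTop_iff_nat 1).1 (by simpa only [Finset.sum_apply] using hl)⟩

variable {F : Type*} [NormedAddCommGroup F] [NormedSpace ℝ F] [CompleteSpace F]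
  [MeasurableSpace F] [BorelSpace F]

lemma ae_exists_tendsto_sum_range_mul_apply_of_identDistrib {Y : ℕ → Ω → F}
    (hY : ∀ t, Measurable (Y t)) (hind : iIndepFun Y μ)
    (hident : ∀ t, IdentDistrib (Y t) (Y 0) μ μ) (hL2 : MemLp (Y 0) 2 μ) (hmean : μ[Y 0] = 0)
    (φ : F →L[ℝ] ℝ) {c : ℕ → ℝ} (hc : Summable fun t => c t ^ 2) :
    ∀ᵐ ω ∂μ, ∃ l, Tendsto (fun T => ∑ t ∈ range T, c t * φ (Y t ω)) atTop (𝓝 l) := by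
  have := hind.isProbabilityMeasure
  have hφY : ∀ t, IdentDistrib (φ ∘ Y t) (φ ∘ Y 0) μ μ := fun t => (hident t).comp φ.measurable
  have hL2t : ∀ t, MemLp (φ ∘ Y t) 2 μ := fun t => (hφY t).memLp_iff.2 (φ.comp_memLp' hL2)
  refine ae_exists_tendsto_sum_range_of_iIndepFun (X := fun t ω => c t * φ (Y t ω))
    (fun t => (φ.measurable.comp (hY t)).const_mul _)
    (hind.comp (fun t y => c t * φ y) fun t => φ.measurable.const_mul _)
    (fun t => (hL2t t).const_mul _) (fun t => ?_) ?_
  · rw [integral_const_mul, φ.integral_comp_comm ((hident t).integrable_iff.2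
      (hL2.integrable one_le_two)), (hident t).integral_eq, hmean, map_zero, mul_zero]
  · simp_rw [variance_const_mul]
    exact (hc.mul_right Var[φ ∘ Y 0; μ]).congr fun t => congrArg _ (hφY t).variance_eq.symm

theorem ae_exists_tendsto_sum_range_smul_apply_of_identDistrib {ι : Type*} [Fintype ι]
    {Y : ℕ → Ω → F} (hY : ∀ t, Measurable (Y t)) (hind : iIndepFun Y μ)
    (hident : ∀ t, IdentDistrib (Y t) (Y 0) μ μ) (hL2 : MemLp (Y 0) 2 μ) (hmean : μ[Y 0] = 0)
    (L : F →L[ℝ] EuclideanSpace ℝ ι) {c : ℕ → ℝ} (hc : Summable fun t => c t ^ 2) :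
    ∀ᵐ ω ∂μ, ∃ l, Tendsto (fun T => ∑ t ∈ range T, c t • L (Y t ω)) atTop (𝓝 l) := by
  have hcoord : ∀ᵐ ω ∂μ, ∀ q,
      ∃ l, Tendsto (fun T => ∑ t ∈ range T, c t * L (Y t ω) q) atTop (𝓝 l) :=
    ae_all_iff.2 fun q => ae_exists_tendsto_sum_range_mul_apply_of_identDistrib hY hind hident hL2
      hmean ((EuclideanSpace.proj q).comp L) hc
  filter_upwards [hcoord] with ω hω
  choose l hl using hω
  refine ⟨(EuclideanSpace.equiv ι ℝ).symm l, ?_⟩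
  refine (((EuclideanSpace.equiv ι ℝ).symm.continuous.tendsto l).comp
    (tendsto_pi_nhds.2 hl)).congr fun T => ?_
  ext q
  simp

end Probability

theorem centralized_estimator_strongly_consistent
    {N n : ℕ} (hN : 0 < N) (m : Fin N → ℕ)
    (H : ∀ i : Fin N, Matrix (Fin (m i)) (Fin n) ℝ)
    (hG : (∑ i : Fin N, (H i)ᵀ * H i).PosDef)
    (θ : Fin n → ℝ)
    {Ω : Type*} [MeasurableSpace Ω] (μ : MeasureTheory.Measure Ω)
    [IsProbabilityMeasure μ]
    (v : ℕ → Ω → ∀ i : Fin N, Fin (m i) → ℝ)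
    (hvmeas : ∀ t, Measurable (v t))
    (hviid : ProbabilityTheory.iIndepFun v μ)
    (hvident : ∀ t, Measure.map (v t) μ = Measure.map (v 0) μ)
    (hvmean : ∀ t, Integrable (v t) μ ∧ ∫ ω, v t ω ∂μ = 0)
    -- finite (2+ε)-moments
    (ε : ℝ) (hε : 0 < ε)
    (hmom : ∀ t, Integrable (fun ω => ‖v t ω‖ ^ (2 + ε)) μ)
    (ac τc : ℝ) (hac : 0 < ac) (hτc : 1 / 2 < τc) (hτc' : τc ≤ 1)
    (u : ℕ → Ω → EuclideanSpace ℝ (Fin n))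
    -- the centralized estimator recursion, with y i t = H i θ + v i t
    (hrec : ∀ (t : ℕ) (ω : Ω) (q : Fin n),
      u (t + 1) ω q =
        u t ω q + (ac / ((t : ℝ) + 1) ^ τc / (N : ℝ)) *
          (∑ i : Fin N,
            ((H i)ᵀ *ᵥ (H i *ᵥ θ + v t ω i - H i *ᵥ fun r => u t ω r)) q)) :
    ∀ᵐ ω ∂μ, Tendsto (fun t : ℕ => u t ω) atTop (nhds (WithLp.toLp 2 (fun q => θ q) : EuclideanSpace ℝ (Fin n))) := by
  obtain ⟨lam, hlam, hcoer⟩ := hG.exists_pos_mul_sq_norm_le_inner_toEuclideanCLM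
  have hacN : 0 < ac / N := div_pos hac (Nat.cast_pos.2 hN)
  have hnoise := ae_exists_tendsto_sum_range_smul_apply_of_identDistrib hvmeas hviid
    (fun t => ⟨(hvmeas t).aemeasurable, (hvmeas 0).aemeasurable, hvident t⟩)
    (memLp_two_of_integrable_norm_rpow (hvmeas 0).aestronglyMeasurable hε (hmom 0))
    (hvmean 0).2 (sumTransposeMulVec H) (summable_div_natCast_add_one_rpow_sq (ac / N) hτc)
  filter_upwards [hnoise] with ω ⟨l, hl⟩
  have herr := tendsto_zero_of_eq_sub_smul_add (e := fun t => u t ω - WithLp.toLp 2 θ) hlam hcoer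
    (fun t => by positivity) (tendsto_div_natCast_add_one_rpow_nhds_zero _ (by linarith))
    (tendsto_sum_range_div_natCast_add_one_rpow_atTop hacN hτc') hl fun t =>
      sub_toLp_eq_of_forall_apply_eq H θ (v t ω) fun q => by rw [hrec t ω q, div_right_comm]
  simpa using herr.add_const (WithLp.toLp 2 θ)
end

section
/- Necessary-condition bound for triggering: suppose that between triggering instants the estimate increments satisfy ‖x_i(t+1) − x_i(t_k^i)‖ ≤ ‖x_i(t) − x_i(t_k^i)‖ + c6/(t+1)^{τ0+τ2} for all t ≥ t_k^i > T6, for constants c6 > 0, τ0 + τ2 > ρ0 > 0. If the next triggering occurs at t_{k+1}^i = t_k^i + L_k^i, i.e., ‖x_i(t_{k+1}^i) − x_i(t_k^i)‖ > 1/(t_{k+1}^i + 1)^{ρ0}, then necessarily (t_k^i + 1 + L_k^i)^{ρ0} · L_k^i / (t_k^i + 1)^{τ0+τ2} > 1/c6. -/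
/-!
Between two triggering instants each step adds at most `c6 / (t + 1) ^ (τ0 + τ2)` to the
deviation `‖x t - x tk‖`, and since `τ0 + τ2 ≥ 0` this is at most `c6 / (tk + 1) ^ (τ0 + τ2)`.
After `Lk` steps the deviation is therefore at most `Lk · c6 / (tk + 1) ^ (τ0 + τ2)`; for the
trigger to fire it must exceed `1 / (tk + Lk + 1) ^ ρ0`, and clearing denominators gives the bound.
-/

theorem le_add_mul_of_succ_le_add (u : ℕ → ℝ) (δ : ℝ) (h : ∀ m, u (m + 1) ≤ u m + δ) :
    ∀ m : ℕ, u m ≤ u 0 + m * δ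
  | 0 => by simp
  | m + 1 => by push_cast; linarith [h m, le_add_mul_of_succ_le_add u δ h m]

theorem norm_sub_le_mul_of_norm_sub_succ_le {E : Type*} [SeminormedAddCommGroup E]
    (x : ℕ → E) (t₀ : ℕ) (δ : ℝ)
    (h : ∀ t : ℕ, t₀ ≤ t → ‖x (t + 1) - x t₀‖ ≤ ‖x t - x t₀‖ + δ) (m : ℕ) :
    ‖x (t₀ + m) - x t₀‖ ≤ m * δ := by
  simpa using le_add_mul_of_succ_le_add (fun m => ‖x (t₀ + m) - x t₀‖) δ
    (fun m => h (t₀ + m) (Nat.le_add_right t₀ m)) m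

theorem triggering_necessary_condition_general {n : ℕ}
    (x : ℕ → EuclideanSpace ℝ (Fin n))
    (tk Lk : ℕ)
    (c6 τ0 τ2 ρ0 : ℝ) (hc6 : 0 < c6) (hρ0 : 0 < ρ0) (hττρ : ρ0 < τ0 + τ2)
    (hstep : ∀ t : ℕ, tk ≤ t →
      ‖x (t + 1) - x tk‖ ≤ ‖x t - x tk‖ + c6 / ((t : ℝ) + 1) ^ (τ0 + τ2))
    (htrig : 1 / (((tk : ℝ) + (Lk : ℝ)) + 1) ^ ρ0 < ‖x (tk + Lk) - x tk‖) :
    ((tk : ℝ) + 1 + (Lk : ℝ)) ^ ρ0 * (Lk : ℝ) / ((tk : ℝ) + 1) ^ (τ0 + τ2)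
      > 1 / c6 := by
  set A := ((tk : ℝ) + 1) ^ (τ0 + τ2)
  set B := ((tk : ℝ) + 1 + (Lk : ℝ)) ^ ρ0
  have hτ : 0 ≤ τ0 + τ2 := (hρ0.trans hττρ).le
  have hA : 0 < A := by positivity
  have hB : 0 < B := by positivity
  have hdrift : ‖x (tk + Lk) - x tk‖ ≤ Lk * (c6 / A) := by
    refine norm_sub_le_mul_of_norm_sub_succ_le x tk _ (fun t ht => (hstep t ht).trans ?_) Lk
    gcongr
    exact Real.rpow_le_rpow (by positivity) (by gcongr) hτ
  have hfired : 1 / B < Lk * (c6 / A) := by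
    rw [add_right_comm] at htrig
    exact htrig.trans_le hdrift
  calc 1 / c6 < Lk * (c6 / A) * B / c6 := by
        gcongr
        rwa [div_lt_iff₀ hB] at hfired
    _ = B * Lk / A := by field_simp

theorem triggering_necessary_condition {n : ℕ}
    (x : ℕ → EuclideanSpace ℝ (Fin n))
    (tk Lk T6 : ℕ) (hL : 1 ≤ Lk) (hT6 : T6 < tk)
    (c6 τ0 τ2 ρ0 : ℝ) (hc6 : 0 < c6) (hρ0 : 0 < ρ0) (hττρ : ρ0 < τ0 + τ2)
    (hstep : ∀ t : ℕ, tk ≤ t →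
      ‖x (t + 1) - x tk‖ ≤ ‖x t - x tk‖ + c6 / ((t : ℝ) + 1) ^ (τ0 + τ2))
    (htrig : 1 / (((tk : ℝ) + (Lk : ℝ)) + 1) ^ ρ0 < ‖x (tk + Lk) - x tk‖) :
    ((tk : ℝ) + 1 + (Lk : ℝ)) ^ ρ0 * (Lk : ℝ) / ((tk : ℝ) + 1) ^ (τ0 + τ2)
      > 1 / c6 :=
  triggering_necessary_condition_general x tk Lk c6 τ0 τ2 ρ0 hc6 hρ0 hττρ hstep htrig
end
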